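/- The 2×4 matrix [[cos θ, 1, −sin θ, 0], [sin θ, 0, cos θ, 1]] has kernel (as a map ℝ⁴ → ℝ²) equal to the two-dimensional real subspace { (Re(z e^{−iν₁}), Re(z e^{−iν₂}), Re(z e^{−iν₃}), Re(z e^{−iν₄})) : z ∈ ℂ } where (ν₁,ν₂,ν₃,ν₄) = (θ/2, π−θ/2, π/2+θ/2, 3π/2−θ/2). -/

import Mathlib

/-!
Put `w = z e^{-iθ/2}`. Since `e^{-iπ} = -1` and `e^{-iπ/2} = -i`, the four coordinates of the
parametrised vector are `Re w, -Re (w e^{iθ}), Im w, -Im (w e^{iθ})`. The two kernel equations say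
precisely that `x₂ + i x₄ = -e^{iθ} (x₁ + i x₃)`, so the kernel is this same graph over `w = x₁ + i x₃`;
and `z ↦ z e^{-iθ/2}` is a bijection of `ℂ`.
-/

open Complex

noncomputable def rotatedGraph (θ : ℝ) (w : ℂ) : ℝ × ℝ × ℝ × ℝ :=
  (w.re, -(w * cexp (θ * I)).re, w.im, -(w * cexp (θ * I)).im)

lemma kernel_eqns_iff_mem_range_rotatedGraph (θ : ℝ) (x : ℝ × ℝ × ℝ × ℝ) :
    (Real.cos θ * x.1 + x.2.1 - Real.sin θ * x.2.2.1 = 0 ∧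
      Real.sin θ * x.1 + Real.cos θ * x.2.2.1 + x.2.2.2 = 0) ↔
      x ∈ Set.range (rotatedGraph θ) := by
  obtain ⟨x₁, x₂, x₃, x₄⟩ := x
  simp only [Set.mem_range, rotatedGraph, mul_re, mul_im, exp_ofReal_mul_I_re,
    exp_ofReal_mul_I_im, Prod.ext_iff]
  constructor
  · rintro ⟨h₁, h₂⟩
    exact ⟨⟨x₁, x₃⟩, rfl, by linear_combination -h₁, rfl, by linear_combination -h₂⟩
  · rintro ⟨w, rfl, rfl, rfl, rfl⟩
    constructor <;> ring

lemma re_mul_cexp_tuple_eq_rotatedGraph (θ : ℝ) (z : ℂ) :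
    ((z * cexp (-(θ / 2 : ℝ) * I)).re,
        (z * cexp (-(Real.pi - θ / 2 : ℝ) * I)).re,
        (z * cexp (-(Real.pi / 2 + θ / 2 : ℝ) * I)).re,
        (z * cexp (-(3 * Real.pi / 2 - θ / 2 : ℝ) * I)).re) =
      rotatedGraph θ (z * cexp (-(θ / 2 : ℝ) * I)) := by
  have h₂ : cexp (-(Real.pi - θ / 2 : ℝ) * I) = -(cexp (-(θ / 2 : ℝ) * I) * cexp (θ * I)) := by
    rw [show (-(Real.pi - θ / 2 : ℝ) * I : ℂ) = -(θ / 2 : ℝ) * I + θ * I + -(Real.pi * I) by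
      push_cast; ring, exp_add, exp_add, exp_neg_pi_mul_I]
    ring
  have h₃ : cexp (-(Real.pi / 2 + θ / 2 : ℝ) * I) = cexp (-(θ / 2 : ℝ) * I) * -I := by
    rw [show (-(Real.pi / 2 + θ / 2 : ℝ) * I : ℂ) = -(θ / 2 : ℝ) * I + -Real.pi / 2 * I by
      push_cast; ring, exp_add, exp_neg_pi_div_two_mul_I]
  have h₄ : cexp (-(3 * Real.pi / 2 - θ / 2 : ℝ) * I) =
      cexp (-(θ / 2 : ℝ) * I) * cexp (θ * I) * I := by
    rw [show (-(3 * Real.pi / 2 - θ / 2 : ℝ) * I : ℂ) =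
        -(θ / 2 : ℝ) * I + θ * I + -(Real.pi * I) + -Real.pi / 2 * I by
      push_cast; ring, exp_add, exp_add, exp_add, exp_neg_pi_mul_I, exp_neg_pi_div_two_mul_I]
    ring
  rw [h₂, h₃, h₄]
  simp only [rotatedGraph, ← mul_assoc, mul_neg, neg_re, mul_re, I_re, I_im]
  ring_nf

open Real Complex in
theorem kernel_eq_S_holomorphic_space_general (θ : ℝ) :
    {x : ℝ × ℝ × ℝ × ℝ |
        Real.cos θ * x.1 + x.2.1 - Real.sin θ * x.2.2.1 = 0 ∧
        Real.sin θ * x.1 + Real.cos θ * x.2.2.1 + x.2.2.2 = 0} =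
      {x : ℝ × ℝ × ℝ × ℝ | ∃ z : ℂ,
        x = ((z * Complex.exp (-(θ / 2 : ℝ) * Complex.I)).re,
             (z * Complex.exp (-(π - θ / 2 : ℝ) * Complex.I)).re,
             (z * Complex.exp (-(π / 2 + θ / 2 : ℝ) * Complex.I)).re,
             (z * Complex.exp (-(3 * π / 2 - θ / 2 : ℝ) * Complex.I)).re)} := by
  have hrot : Function.Surjective fun z : ℂ ↦ z * cexp (-(θ / 2 : ℝ) * I) :=
    mul_right_surjective₀ (Complex.exp_ne_zero _)
  ext x
  rw [Set.mem_ofPred_eq, kernel_eqns_iff_mem_range_rotatedGraph, ← hrot.range_comp]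
  simp only [Set.mem_range, Function.comp_apply, Set.mem_ofPred_eq,
    re_mul_cexp_tuple_eq_rotatedGraph, eq_comm]

open Real Complex in
theorem kernel_eq_S_holomorphic_space (θ : ℝ) (hθ : θ ∈ Set.Ioo 0 (π / 2)) :
    {x : ℝ × ℝ × ℝ × ℝ |
        Real.cos θ * x.1 + x.2.1 - Real.sin θ * x.2.2.1 = 0 ∧
        Real.sin θ * x.1 + Real.cos θ * x.2.2.1 + x.2.2.2 = 0} =
      {x : ℝ × ℝ × ℝ × ℝ | ∃ z : ℂ,
        x = ((z * Complex.exp (-(θ / 2 : ℝ) * Complex.I)).re,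
             (z * Complex.exp (-(π - θ / 2 : ℝ) * Complex.I)).re,
             (z * Complex.exp (-(π / 2 + θ / 2 : ℝ) * Complex.I)).re,
             (z * Complex.exp (-(3 * π / 2 - θ / 2 : ℝ) * Complex.I)).re)} :=
  kernel_eq_S_holomorphic_space_general θ
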